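/- arXiv:2511.00298 — 2 statements merged into one kernel-verified Lean document; each statement's English description precedes it below -/
import Mathlib

section
/- Let d ≥ 2, let G₀ be a semisimple graph, and let M be a matroid on E(G₀) with the d-dimensional 0-extension property whose rank is at most d·n, where n = |V(G)| for a subgraph G = (V,E) of G₀. Let t ≥ 0 be an integer and let X₀ ⊆ X₁ ⊆ ⋯ ⊆ X_t = V be sets such that for all 1 ≤ i ≤ t and every v ∈ X_i − X_{i−1}, we have |N_G(v) ∩ X_{i−1}| ≥ d. Then G has an M-seed K with |K| ≤ 2·|X₀|·d^{t+1}/(d−1). -/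
/-!
Give each vertex the level `lev u`, the first `i` with `u ∈ X i`. Adding the vertices of `V \ X₀`
in order of increasing level, each new vertex `v` has `d` neighbours among the earlier ones, so by
the 0-extension property its star to them extends to a set `T_v` of new edges that is independent
over the graph built so far. Hence `r G[K] + d |V \ K| ≤ r G` for every `K ⊇ X₀`, and the total
excess `∑ (|T_v| - d) = r G - r G[X₀] - d |V \ X₀|` is at most `d |X₀|` because `r G ≤ d |V|`.

Going back through this order, keep `v` if `|T_v| > d` or if `v` is an end of `T_w` for a kept
vertex `w` added later. The sets `T_v` of the kept vertices are then edges of `G[K]`, still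
independent, which gives `r G = r G[K] + d |V \ K|`. A kept vertex of level `ℓ` forces at most
`1 + d + ⋯ + d^(ℓ-1)` vertices, and each unit of excess keeps at most two vertices for their own
sake (the vertex with the excess and the end of an excess edge), so
`|K| ≤ |X₀| + 2 d |X₀| (d^t - 1)/(d - 1)`.
-/

open Finset

/-- A semisimple graph: a finite vertex set together with a set of edges
(elements of `Sym2 ν`, so loops are allowed but there are no parallel edges),
each of whose endpoints lies in the vertex set. -/
structure SSGraph (ν : Type*) [DecidableEq ν] where
  verts : Finset ν
  edges : Finset (Sym2 ν)
  incident : ∀ e ∈ edges, ∀ x ∈ e, x ∈ verts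

namespace SSGraph

variable {ν : Type*} [DecidableEq ν]

/-- The subgraph relation. -/
def Sub (G H : SSGraph ν) : Prop := G.verts ⊆ H.verts ∧ G.edges ⊆ H.edges

/-- The set of vertices of `G` adjacent to `x` (including `x` itself if there is a loop at `x`). -/
def nbrs (G : SSGraph ν) (x : ν) : Finset ν :=
  G.verts.filter (fun y => s(x, y) ∈ G.edges)

/-- The degree of a vertex: the number of incident edges, counting a loop once. -/
def deg (G : SSGraph ν) (v : ν) : ℕ := (G.edges.filter (fun e => v ∈ e)).card

/-- The edge set of the subgraph of `G` induced by `K`. -/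
def induce (G : SSGraph ν) (K : Finset ν) : Finset (Sym2 ν) :=
  G.edges ∩ K.sym2

/-- Deletion of a vertex. -/
def del (G : SSGraph ν) (u : ν) : SSGraph ν where
  verts := G.verts.erase u
  edges := G.edges.filter (fun e => u ∉ e)
  incident := by
    intro e he x hx
    simp only [mem_filter] at he
    exact mem_erase.mpr ⟨fun h => he.2 (h ▸ hx), G.incident e he.1 x hx⟩

/-- `G₂` is obtained from `G₁` by a `d`-dimensional 0-extension: add a new vertex `v`
joined to `d` vertices of `V(G₁) + v` (a loop at `v` being added if `v` is among them). -/
def IsZeroExt (d : ℕ) (G₁ G₂ : SSGraph ν) : Prop :=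
  ∃ v ∉ G₁.verts, ∃ D : Finset ν, D ⊆ insert v G₁.verts ∧ D.card = d ∧
    G₂.verts = insert v G₁.verts ∧ G₂.edges = G₁.edges ∪ D.image (fun u => s(v, u))

/-- `G₂` is obtained from `G₁` by a `d`-dimensional double 1-extension on an edge `xy`. -/
def IsDouble1Ext (d : ℕ) (G₁ G₂ : SSGraph ν) : Prop :=
  ∃ x y, s(x, y) ∈ G₁.edges ∧
  ∃ u v, u ∉ G₁.verts ∧ v ∉ G₁.verts ∧ u ≠ v ∧
  ∃ Du Dv : Finset ν,
    Du ⊆ insert u G₁.verts ∧ x ∈ Du ∧ Du.card = d ∧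
    Dv ⊆ insert v G₁.verts ∧ y ∈ Dv ∧ Dv.card = d ∧
    G₂.verts = insert u (insert v G₁.verts) ∧
    G₂.edges = insert s(u, v)
      (((G₁.edges.erase s(x, y)) ∪ Du.image (fun w => s(u, w))) ∪ Dv.image (fun w => s(v, w)))

/-- `G₂` is obtained from `G₁` by a `d`-dimensional looped 1-extension on a non-loop edge `xy`. -/
def IsLooped1Ext (d : ℕ) (G₁ G₂ : SSGraph ν) : Prop :=
  ∃ x y, x ≠ y ∧ s(x, y) ∈ G₁.edges ∧
  ∃ v ∉ G₁.verts, ∃ D : Finset ν, D ⊆ G₁.verts ∧ x ∈ D ∧ y ∈ D ∧ D.card = d ∧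
    G₂.verts = insert v G₁.verts ∧
    G₂.edges = insert s(v, v) ((G₁.edges.erase s(x, y)) ∪ D.image (fun w => s(v, w)))

end SSGraph

variable {ν : Type*} [DecidableEq ν]

/-- `r` is the rank function of a matroid on the edges. -/
structure IsRankFn (r : Finset (Sym2 ν) → ℕ) : Prop where
  empty : r ∅ = 0
  le_insert : ∀ A e, r A ≤ r (insert e A)
  insert_le : ∀ A e, r (insert e A) ≤ r A + 1
  submodular : ∀ A B, r (A ∪ B) + r (A ∩ B) ≤ r A + r B

/-- A graph is `M`-independent if its edge set is independent in the matroid with rank function `r`. -/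
def Indep (r : Finset (Sym2 ν) → ℕ) (G : SSGraph ν) : Prop := r G.edges = G.edges.card

/-- The matroid with rank function `r` on the edges of `G₀` has the `d`-dimensional
0-extension property. -/
def ZeroExtProp (d : ℕ) (r : Finset (Sym2 ν) → ℕ) (G₀ : SSGraph ν) : Prop :=
  ∀ G₁ G₂ : SSGraph ν, G₁.Sub G₀ → G₂.Sub G₀ → Indep r G₁ →
    SSGraph.IsZeroExt d G₁ G₂ → Indep r G₂

/-- The `d`-dimensional double 1-extension property. -/
def Double1ExtProp (d : ℕ) (r : Finset (Sym2 ν) → ℕ) (G₀ : SSGraph ν) : Prop :=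
  ∀ G₁ G₂ : SSGraph ν, G₁.Sub G₀ → G₂.Sub G₀ → Indep r G₁ →
    SSGraph.IsDouble1Ext d G₁ G₂ → Indep r G₂

/-- The `d`-dimensional looped 1-extension property. -/
def Looped1ExtProp (d : ℕ) (r : Finset (Sym2 ν) → ℕ) (G₀ : SSGraph ν) : Prop :=
  ∀ G₁ G₂ : SSGraph ν, G₁.Sub G₀ → G₂.Sub G₀ → Indep r G₁ →
    SSGraph.IsLooped1Ext d G₁ G₂ → Indep r G₂

/-- `K` is an `M`-seed of `G` with respect to `d`. -/
def IsSeed (d : ℕ) (r : Finset (Sym2 ν) → ℕ) (G : SSGraph ν) (K : Finset ν) : Prop :=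
  K ⊆ G.verts ∧
  r G.edges = r (G.induce K) + d * (G.verts.card - K.card) ∧
  ∀ K' : Finset ν, K ⊆ K' → K' ⊂ G.verts →
    ∃ x ∈ G.verts \ K', d ≤ ((insert x K') ∩ G.nbrs x).card

def geomSum (d ℓ : ℕ) : ℕ := ∑ i ∈ range ℓ, d ^ i

theorem geomSum_succ (d ℓ : ℕ) : geomSum d (ℓ + 1) = d * geomSum d ℓ + 1 := geom_sum_succ

theorem geomSum_mono (d : ℕ) {ℓ ℓ' : ℕ} (h : ℓ ≤ ℓ') : geomSum d ℓ ≤ geomSum d ℓ' :=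
  sum_le_sum_of_subset (range_mono h)

theorem Finset.sum_le_card_mul_add_card_sdiff_mul {ι : Type*} [DecidableEq ι] {f : ι → ℕ}
    {D E : Finset ι} {a b : ℕ} (hDE : D ⊆ E) (hD : ∀ y ∈ D, f y ≤ a) (hE : ∀ y ∈ E, f y ≤ b) :
    ∑ y ∈ E, f y ≤ #D * a + #(E \ D) * b := by
  rw [← sum_sdiff hDE, add_comm]
  exact add_le_add (by simpa using sum_le_card_nsmul D f a hD)
    (by simpa using sum_le_card_nsmul (E \ D) f b fun y hy => hE y (sdiff_subset hy))

theorem Finset.sum_erase_add_le {ι : Type*} [DecidableEq ι] {f : ι → ℕ} {s : Finset ι} {a : ι}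
    {c : ℕ} (h : a ∉ s → f a ≤ c) : ∑ x ∈ s.erase a, f x + f a ≤ ∑ x ∈ s, f x + c := by
  by_cases ha : a ∈ s
  · rw [sum_erase_add s f ha]
    exact Nat.le_add_right _ _
  · rw [erase_eq_of_notMem ha]
    exact Nat.add_le_add_left (h ha) _

theorem card_mul_pred_le {d t x₀ a : ℕ} (ha : a ≤ 2 * geomSum d t * (d * x₀)) :
    (x₀ + a) * (d - 1) ≤ 2 * x₀ * d ^ (t + 1) := by
  obtain _ | e := d
  · simp
  have hgeom : geomSum (e + 1) t * e + 1 = (e + 1) ^ t := geom_sum_mul_add e t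
  rw [Nat.add_sub_cancel, pow_succ, ← hgeom]
  nlinarith

theorem Finset.subset_of_chain {ι : Type*} {X : ℕ → Finset ι} {t : ℕ}
    (hmono : ∀ i < t, X i ⊆ X (i + 1)) {i : ℕ} (hi : i ≤ t) : X i ⊆ X t := by
  induction t, hi using Nat.le_induction with
  | base => exact subset_rfl
  | succ t hit ih => exact (ih fun j hj => hmono j (by omega)).trans (hmono t (by omega))

namespace IsRankFn

variable {r : Finset (Sym2 ν) → ℕ}

theorem le_union (hr : IsRankFn r) (A C : Finset (Sym2 ν)) : r A ≤ r (A ∪ C) := by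
  induction C using Finset.induction_on with
  | empty => simp
  | insert e C _ ih => rw [union_insert]; exact ih.trans (hr.le_insert _ _)

theorem mono (hr : IsRankFn r) {A B : Finset (Sym2 ν)} (h : A ⊆ B) : r A ≤ r B := by
  simpa [union_eq_right.mpr h] using hr.le_union A B

theorem union_le_add_card (hr : IsRankFn r) (A C : Finset (Sym2 ν)) :
    r (A ∪ C) ≤ r A + #C := by
  induction C using Finset.induction_on with
  | empty => simp
  | insert e C he ih =>
    rw [union_insert, card_insert_of_notMem he]
    exact (hr.insert_le _ _).trans (by omega)

theorem add_card_le_union_of_subset (hr : IsRankFn r) {A A' T : Finset (Sym2 ν)}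
    (hA' : A' ⊆ A) (hT : r (A ∪ T) = r A + #T) : r A' + #T ≤ r (A' ∪ T) := by
  have hsub := hr.submodular (A' ∪ T) A
  rw [union_right_comm, union_eq_right.mpr hA', hT] at hsub
  have := hr.mono (subset_inter (subset_union_left (s₂ := T)) hA')
  omega

theorem union_eq_of_forall_insert_eq (hr : IsRankFn r) {B C : Finset (Sym2 ν)}
    (h : ∀ e ∈ C, r (insert e B) = r B) : r (B ∪ C) = r B := by
  induction C using Finset.induction_on with
  | empty => simp
  | insert e C _ ih =>
    have hBC := ih fun e' he' => h e' (mem_insert_of_mem he')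
    have hsub := hr.submodular (B ∪ C) (insert e B)
    rw [show B ∪ C ∪ insert e B = B ∪ insert e C by grind] at hsub
    have := hr.mono (show B ⊆ (B ∪ C) ∩ insert e B by grind)
    have := hr.le_union B (insert e C)
    have := h e (mem_insert_self e C)
    omega

theorem exists_extension (hr : IsRankFn r) {A C T₀ : Finset (Sym2 ν)} (hT₀C : T₀ ⊆ C)
    (hT₀ : r (A ∪ T₀) = r A + #T₀) :
    ∃ T, T₀ ⊆ T ∧ T ⊆ C ∧ r (A ∪ T) = r A + #T ∧ r (A ∪ C) = r (A ∪ T) := by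
  set S := {T ∈ C.powerset | T₀ ⊆ T ∧ r (A ∪ T) = r A + #T}
  obtain ⟨T, hTS, hmax⟩ := S.exists_max_image card ⟨T₀, by simp [S, hT₀C, hT₀]⟩
  simp only [S, mem_filter, mem_powerset] at hTS hmax
  obtain ⟨hTC, hT₀T, hT⟩ := hTS
  refine ⟨T, hT₀T, hTC, hT, ?_⟩
  have hspan : ∀ e ∈ C, r (insert e (A ∪ T)) = r (A ∪ T) := by
    intro e he
    by_contra hne
    have heT : e ∉ T := fun h => hne (by rw [insert_eq_of_mem (mem_union_right A h)])
    have := hr.le_insert (A ∪ T) e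
    have := hr.insert_le (A ∪ T) e
    have := hmax (insert e T) ⟨insert_subset he hTC, hT₀T.trans (subset_insert e T), by
      rw [union_insert, card_insert_of_notMem heT]; omega⟩
    rw [card_insert_of_notMem heT] at this
    omega
  rw [← hr.union_eq_of_forall_insert_eq hspan, union_assoc, union_eq_right.mpr hTC]

theorem exists_basis (hr : IsRankFn r) (C : Finset (Sym2 ν)) :
    ∃ B ⊆ C, r B = #B ∧ r C = r B := by
  obtain ⟨B, -, hBC, hB, hCB⟩ :=
    hr.exists_extension (A := ∅) (empty_subset C) (by simp [hr.empty])
  simp only [empty_union, hr.empty, zero_add] at hB hCB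
  exact ⟨B, hBC, hB, hCB⟩

end IsRankFn

namespace SSGraph

variable {G : SSGraph ν}

theorem mem_induce {A : Finset ν} {e : Sym2 ν} :
    e ∈ G.induce A ↔ e ∈ G.edges ∧ ∀ x ∈ e, x ∈ A := by
  simp [induce, mem_sym2_iff]

theorem induce_mono {A B : Finset ν} (h : A ⊆ B) : G.induce A ⊆ G.induce B :=
  inter_subset_inter_left (sym2_mono h)

theorem induce_verts : G.induce G.verts = G.edges :=
  inter_eq_left.mpr fun e he => mem_sym2_iff.mpr (G.incident e he)

theorem mem_nbrs {x y : ν} : y ∈ G.nbrs x ↔ y ∈ G.verts ∧ s(x, y) ∈ G.edges := by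
  simp [nbrs]

theorem image_subset_induce_insert {w : ν} {A D : Finset ν} (hD : D ⊆ G.nbrs w ∩ A) :
    D.image (fun u => s(w, u)) ⊆ G.induce (insert w A) := by
  simp only [subset_iff, mem_image, forall_exists_index, and_imp]
  rintro _ u hu rfl
  obtain ⟨hun, huA⟩ := mem_inter.mp (hD hu)
  refine mem_induce.mpr ⟨(mem_nbrs.mp hun).2, fun x hx => ?_⟩
  rcases Sym2.mem_iff.mp hx with rfl | rfl
  exacts [mem_insert_self x A, mem_insert_of_mem huA]

theorem image_disjoint_induce {w : ν} {A : Finset ν} (hwA : w ∉ A) (D : Finset ν) :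
    Disjoint (D.image fun u => s(w, u)) (G.induce A) := by
  simp only [disjoint_left, mem_image, forall_exists_index, and_imp]
  rintro _ u _ rfl he
  exact hwA ((mem_induce.mp he).2 w (Sym2.mem_mk_left w u))

theorem card_image_mk (w : ν) (D : Finset ν) : #(D.image fun u => s(w, u)) = #D :=
  card_image_of_injective D fun _ _ => Sym2.congr_right.mp

/-- The edges of `G[W]` outside `G[W - v]` are all incident to `v`. -/
theorem subset_induce_insert {T : Finset (Sym2 ν)} {v : ν} {W K : Finset ν}
    (hT : T ⊆ G.induce W \ G.induce (W.erase v)) (hK : {y ∈ W.erase v | s(v, y) ∈ T} ⊆ K) :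
    T ⊆ G.induce (insert v K) := by
  intro e he
  obtain ⟨heW, heW'⟩ := mem_sdiff.mp (hT he)
  obtain ⟨heE, hends⟩ := mem_induce.mp heW
  obtain ⟨x, hxe, hxW'⟩ : ∃ x ∈ e, x ∉ W.erase v := by
    by_contra! h
    exact heW' (mem_induce.mpr ⟨heE, h⟩)
  obtain rfl : x = v := by
    by_contra hxv
    exact hxW' (mem_erase.mpr ⟨hxv, hends x hxe⟩)
  obtain ⟨y, rfl⟩ := Sym2.mem_iff_exists.mp hxe
  refine mem_induce.mpr ⟨heE, fun z hz => ?_⟩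
  rcases Sym2.mem_iff.mp hz with rfl | rfl
  · exact mem_insert_self z K
  · rcases eq_or_ne z x with rfl | hzx
    · exact mem_insert_self z K
    · exact mem_insert_of_mem
        (hK (mem_filter.mpr ⟨mem_erase.mpr ⟨hzx, hends z (Sym2.mem_mk_right x z)⟩, he⟩))

end SSGraph

namespace ZeroExtProp

open SSGraph

variable {r : Finset (Sym2 ν) → ℕ} {d : ℕ} {G₀ G : SSGraph ν}

theorem rank_induce_union_image (hr : IsRankFn r) (hext : ZeroExtProp d r G₀) (hG : G.Sub G₀)
    {A D : Finset ν} {w : ν} (hA : A ⊆ G.verts) (hw : w ∈ G.verts) (hwA : w ∉ A)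
    (hD : D ⊆ G.nbrs w ∩ A) (hDcard : #D = d) :
    r (G.induce A ∪ D.image fun u => s(w, u)) = r (G.induce A) + d := by
  set star := D.image fun u => s(w, u)
  have hstar : star ⊆ G.induce (insert w A) := image_subset_induce_insert hD
  -- the 0-extension property only speaks about independent graphs: apply it to a basis of `G[A]`
  obtain ⟨B, hBA, hB, hAB⟩ := hr.exists_basis (G.induce A)
  let G₁ : SSGraph ν := ⟨A, B, fun e he => (mem_induce.mp (hBA he)).2⟩
  let G₂ : SSGraph ν := ⟨insert w A, B ∪ star, fun e he => by
    rcases mem_union.mp he with he | he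
    · exact fun x hx => mem_insert_of_mem ((mem_induce.mp (hBA he)).2 x hx)
    · exact (mem_induce.mp (hstar he)).2⟩
  have hsub₁ : G₁.Sub G₀ := ⟨hA.trans hG.1, (hBA.trans inter_subset_left).trans hG.2⟩
  have hsub₂ : G₂.Sub G₀ := ⟨insert_subset (hG.1 hw) (hA.trans hG.1),
    union_subset (hBA.trans inter_subset_left) (hstar.trans inter_subset_left) |>.trans hG.2⟩
  have hind : r (B ∪ star) = #(B ∪ star) :=
    hext G₁ G₂ hsub₁ hsub₂ hB ⟨w, hwA, D, (inter_subset_right.trans (subset_insert w A)).trans' hD,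
      hDcard, rfl, rfl⟩
  rw [card_union_of_disjoint ((image_disjoint_induce hwA D).symm.mono_left hBA),
    card_image_mk, hDcard] at hind
  refine le_antisymm ?_ ?_
  · simpa [star, card_image_mk, hDcard] using hr.union_le_add_card (G.induce A) star
  · rw [hAB, hB, ← hind]
    exact hr.mono (union_subset_union_left hBA)

theorem add_le_rank_induce_insert (hr : IsRankFn r) (hext : ZeroExtProp d r G₀) (hG : G.Sub G₀)
    {A : Finset ν} {w : ν} (hA : A ⊆ G.verts) (hw : w ∈ G.verts) (hwA : w ∉ A)
    (hnbrs : d ≤ #(G.nbrs w ∩ A)) : r (G.induce A) + d ≤ r (G.induce (insert w A)) := by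
  obtain ⟨D, hD, hDcard⟩ := exists_subset_card_eq hnbrs
  rw [← hext.rank_induce_union_image hr hG hA hw hwA hD hDcard]
  exact hr.mono (union_subset (induce_mono (subset_insert w A)) (image_subset_induce_insert hD))

theorem exists_edges_extending (hr : IsRankFn r) (hext : ZeroExtProp d r G₀) (hG : G.Sub G₀)
    {W D : Finset ν} {v : ν} (hW : W ⊆ G.verts) (hv : v ∈ W)
    (hD : D ⊆ G.nbrs v ∩ W.erase v) (hDcard : #D = d) :
    ∃ T ⊆ G.induce W \ G.induce (W.erase v), D.image (fun u => s(v, u)) ⊆ T ∧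
      r (G.induce (W.erase v) ∪ T) = r (G.induce (W.erase v)) + #T ∧
      r (G.induce W) = r (G.induce (W.erase v)) + #T := by
  have hstar : D.image (fun u => s(v, u)) ⊆ G.induce W \ G.induce (W.erase v) := by
    refine subset_sdiff.mpr ⟨?_, image_disjoint_induce (notMem_erase v W) D⟩
    simpa only [insert_erase hv] using image_subset_induce_insert hD
  obtain ⟨T, hDT, hTC, hT, hspan⟩ := hr.exists_extension hstar (by
    rw [card_image_mk, hDcard]
    exact hext.rank_induce_union_image hr hG ((erase_subset v W).trans hW) (hW hv)
      (notMem_erase v W) hD hDcard)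
  rw [union_sdiff_of_subset (induce_mono (erase_subset v W))] at hspan
  exact ⟨T, hTC, hDT, hT, hspan.trans hT⟩

end ZeroExtProp

namespace SSGraph

def IsLeveled (G : SSGraph ν) (d : ℕ) (X₀ W : Finset ν) (lev : ν → ℕ) : Prop :=
  ∀ v ∈ W \ X₀, d ≤ #{y ∈ G.nbrs v ∩ W | lev y < lev v}

namespace IsLeveled

variable {r : Finset (Sym2 ν) → ℕ} {d : ℕ} {G₀ G : SSGraph ν} {X₀ W : Finset ν} {lev : ν → ℕ}

/-- A vertex of `W \ K` of least level has all its lower neighbours in `K`. -/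
theorem exists_le_card_nbrs_inter (h : G.IsLeveled d X₀ W lev) {K : Finset ν} (hX₀K : X₀ ⊆ K)
    (hWK : ¬W ⊆ K) : ∃ x ∈ W \ K, d ≤ #(G.nbrs x ∩ K) := by
  obtain ⟨x, hx, hmin⟩ := (W \ K).exists_min_image lev (sdiff_nonempty.mpr hWK)
  obtain ⟨hxW, hxK⟩ := mem_sdiff.mp hx
  refine ⟨x, hx, (h x (mem_sdiff.mpr ⟨hxW, fun hxX₀ => hxK (hX₀K hxX₀)⟩)).trans
    (card_le_card fun y hy => ?_)⟩
  obtain ⟨hy, hlt⟩ := mem_filter.mp hy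
  refine mem_inter.mpr ⟨(mem_inter.mp hy).1, ?_⟩
  by_contra hyK
  exact (hmin y (mem_sdiff.mpr ⟨(mem_inter.mp hy).2, hyK⟩)).not_gt hlt

theorem rank_induce_add_le (hr : IsRankFn r) (hext : ZeroExtProp d r G₀) (hG : G.Sub G₀)
    (h : G.IsLeveled d X₀ W lev) (hW : W ⊆ G.verts) {K : Finset ν} (hX₀K : X₀ ⊆ K)
    (hKW : K ⊆ W) : r (G.induce K) + d * #(W \ K) ≤ r (G.induce W) := by
  induction hn : #(W \ K) generalizing K with
  | zero => rw [card_eq_zero, sdiff_eq_empty_iff_subset] at hn; simp [hKW.antisymm hn]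
  | succ n ih =>
    obtain ⟨x, hx, hxK⟩ := h.exists_le_card_nbrs_inter hX₀K
      (fun hWK => by simp [sdiff_eq_empty_iff_subset.mpr hWK] at hn)
    obtain ⟨hxW, hxK'⟩ := mem_sdiff.mp hx
    have hstep := hext.add_le_rank_induce_insert hr hG (hKW.trans hW) (hW hxW) hxK' hxK
    have hn' : #(W \ insert x K) = n := by
      rw [sdiff_insert, card_erase_of_mem hx, hn, Nat.add_sub_cancel]
    have := ih (hX₀K.trans (subset_insert x K)) (insert_subset hxW hKW) hn'
    rw [mul_add_one]
    omega

theorem erase (h : G.IsLeveled d X₀ W lev) {v : ν} (hmax : ∀ u ∈ W \ X₀, lev u ≤ lev v) :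
    G.IsLeveled d X₀ (W.erase v) lev := by
  intro u hu
  have hu' : u ∈ W \ X₀ := mem_sdiff.mpr ⟨mem_of_mem_erase (mem_sdiff.mp hu).1, (mem_sdiff.mp hu).2⟩
  refine (h u hu').trans (card_le_card fun y hy => ?_)
  simp only [mem_filter, mem_inter, mem_erase] at hy ⊢
  exact ⟨⟨hy.1.1, fun hyv => (hyv ▸ hy.2).not_ge (hmax u hu'), hy.1.2⟩, hy.2⟩

/-- `T` contains `d` edges to vertices of level below `lev v`, of total weight at most
`d * geomSum d (lev v - 1) = geomSum d (lev v) - 1`; each of the `x` further edges adds at most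
`geomSum d L`. -/
theorem exists_new_edges (hr : IsRankFn r) (hext : ZeroExtProp d r G₀) (hG : G.Sub G₀)
    (hd : 0 < d) (h : G.IsLeveled d X₀ W lev) (hW : W ⊆ G.verts) {L : ℕ}
    (hL : ∀ u ∈ W, lev u ≤ L) {v : ν} (hv : v ∈ W \ X₀) :
    ∃ T ⊆ G.induce W \ G.induce (W.erase v), ∃ x, #T = d + x ∧
      r (G.induce (W.erase v) ∪ T) = r (G.induce (W.erase v)) + #T ∧
      r (G.induce W) = r (G.induce (W.erase v)) + #T ∧
      ∑ y ∈ W.erase v with s(v, y) ∈ T, geomSum d (lev y) + 1 ≤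
        geomSum d (lev v) + x * geomSum d L := by
  obtain ⟨D, hD, hDcard⟩ := exists_subset_card_eq (h v hv)
  have hDlev : ∀ y ∈ D, lev y < lev v := fun y hy => (mem_filter.mp (hD hy)).2
  have hDW' : D ⊆ G.nbrs v ∩ W.erase v := fun y hy => by
    obtain ⟨hyv, hyW⟩ := mem_inter.mp (mem_filter.mp (hD hy)).1
    exact mem_inter.mpr ⟨hyv, mem_erase.mpr ⟨fun h => (h ▸ hDlev y hy).false, hyW⟩⟩
  obtain ⟨m, hm⟩ : ∃ m, lev v = m + 1 := by
    obtain ⟨y, hy⟩ := card_pos.mp (hDcard ▸ hd)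
    exact Nat.exists_eq_add_one_of_ne_zero (hDlev y hy).ne_zero
  obtain ⟨T, hTnew, hDT, hTind, hTrank⟩ :=
    hext.exists_edges_extending hr hG hW (mem_sdiff.mp hv).1 hDW' hDcard
  obtain ⟨x, hx⟩ : ∃ x, #T = d + x :=
    Nat.exists_eq_add_of_le (hDcard ▸ card_image_mk v D ▸ card_le_card hDT)
  refine ⟨T, hTnew, x, hx, hTind, hTrank, ?_⟩
  set ends := {y ∈ W.erase v | s(v, y) ∈ T}
  have hDends : D ⊆ ends := fun y hy =>
    mem_filter.mpr ⟨(mem_inter.mp (hDW' hy)).2, hDT (mem_image_of_mem _ hy)⟩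
  have hends : #ends ≤ #T := card_le_card_of_injOn (fun y => s(v, y))
    (fun y hy => (mem_filter.mp hy).2) fun _ _ _ _ => Sym2.congr_right.mp
  have hsum := sum_le_card_mul_add_card_sdiff_mul hDends
    (fun y hy => geomSum_mono d (show lev y ≤ m by have := hDlev y hy; omega))
    (fun y hy => geomSum_mono d (hL y (mem_of_mem_erase (mem_filter.mp hy).1)))
  rw [card_sdiff_of_subset hDends, hDcard] at hsum
  have hexcess : (#ends - d) * geomSum d L ≤ x * geomSum d L :=
    Nat.mul_le_mul_right _ (by omega)
  rw [hm, geomSum_succ]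
  linarith

/-- Each vertex of level `ℓ` required to lie in `K` (those of `R`) costs at most `geomSum d ℓ`
vertices of `K \ X₀`, and each unit by which `r G[W]` exceeds `r G[X₀] + d * #(W \ X₀)` costs at
most `2 * geomSum d L`; the bound is written with both sides moved so that no subtraction occurs. -/
theorem exists_core (hr : IsRankFn r) (hext : ZeroExtProp d r G₀) (hG : G.Sub G₀) (hd : 0 < d)
    (h : G.IsLeveled d X₀ W lev) (hX₀W : X₀ ⊆ W) (hW : W ⊆ G.verts) {L : ℕ}
    (hL : ∀ u ∈ W, lev u ≤ L) {R : Finset ν} (hRW : R ⊆ W) :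
    ∃ K, X₀ ⊆ K ∧ R ⊆ K ∧ K ⊆ W ∧
      r (G.induce W) + d * #K ≤ r (G.induce K) + d * #W ∧
      #(K \ X₀) + 2 * geomSum d L * (r (G.induce X₀) + d * #W) ≤
        ∑ u ∈ R, geomSum d (lev u) + 2 * geomSum d L * (r (G.induce W) + d * #X₀) := by
  induction W using Finset.strongInduction generalizing R with
  | H W ih =>
  by_cases hWX₀ : W ⊆ X₀
  · obtain rfl := hX₀W.antisymm hWX₀
    exact ⟨X₀, subset_rfl, hRW, subset_rfl, le_rfl, by simp⟩
  obtain ⟨v, hv, hmax⟩ := (W \ X₀).exists_max_image lev (sdiff_nonempty.mpr hWX₀)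
  obtain ⟨hvW, hvX₀⟩ := mem_sdiff.mp hv
  obtain ⟨T, hTnew, x, hx, hTind, hTrank, hends⟩ := h.exists_new_edges hr hext hG hd hW hL hv
  have hcardW : #W = #(W.erase v) + 1 := (card_erase_add_one hvW).symm
  have ih' := fun R hR => ih (W.erase v) (erase_ssubset hvW) (h.erase hmax)
    (fun y hy => mem_erase.mpr ⟨fun hyv => hvX₀ (hyv ▸ hy), hX₀W hy⟩)
    ((erase_subset v W).trans hW) (fun u hu => hL u (mem_of_mem_erase hu)) (R := R) hR
  by_cases hkeep : v ∈ R ∨ 0 < x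
  · -- keep `v`, and require the other ends of its new edges `T`, which then stay independent
    set ends := {y ∈ W.erase v | s(v, y) ∈ T}
    obtain ⟨K, hX₀K, hRK, hKW, hrankK, hsizeK⟩ := ih' (R.erase v ∪ ends)
      (union_subset (erase_subset_erase v hRW) (filter_subset _ _))
    have hvK : v ∉ K := fun hvK => notMem_erase v W (hKW hvK)
    have hTK : r (G.induce K) + #T ≤ r (G.induce (insert v K)) :=
      (hr.add_card_le_union_of_subset (induce_mono hKW) hTind).trans (hr.mono (union_subset
        (induce_mono (subset_insert v K)) (subset_induce_insert hTnew (union_subset_right hRK))))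
    have hsumR' : ∑ u ∈ R.erase v ∪ ends, geomSum d (lev u) ≤
        ∑ u ∈ R.erase v, geomSum d (lev u) + ∑ u ∈ ends, geomSum d (lev u) :=
      (Nat.le_add_right _ _).trans sum_union_inter.le
    have hsumR : ∑ u ∈ R.erase v, geomSum d (lev u) + geomSum d (lev v) ≤
        ∑ u ∈ R, geomSum d (lev u) + x * geomSum d L := sum_erase_add_le fun hvR =>
      (geomSum_mono d (hL v hvW)).trans (Nat.le_mul_of_pos_left _ (hkeep.resolve_left hvR))
    refine ⟨insert v K, hX₀K.trans (subset_insert v K), fun y hy => ?_,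
      insert_subset hvW (hKW.trans (erase_subset v W)), ?_, ?_⟩
    · rcases eq_or_ne y v with rfl | hyv
      · exact mem_insert_self y K
      · exact mem_insert_of_mem (hRK (mem_union_left _ (mem_erase.mpr ⟨hyv, hy⟩)))
    · rw [card_insert_of_notMem hvK, hcardW, hTrank]
      linarith
    · rw [insert_sdiff_of_notMem _ hvX₀, card_insert_of_notMem fun h => hvK (mem_sdiff.mp h).1,
        hcardW, hTrank, hx]
      linarith
  · -- drop `v`: it contributes exactly `d` to the rank
    obtain ⟨hvR, hx0⟩ := not_or.mp hkeep
    obtain ⟨K, hX₀K, hRK, hKW, hrankK, hsizeK⟩ :=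
      ih' R fun y hy => mem_erase.mpr ⟨fun hyv => hvR (hyv ▸ hy), hRW hy⟩
    rw [hcardW, hTrank, hx, Nat.eq_zero_of_not_pos hx0, add_zero]
    exact ⟨K, hX₀K, hRK, hKW.trans (erase_subset v W), by linarith, by linarith⟩

end IsLeveled

theorem isLeveled_of_chain {G : SSGraph ν} {d t : ℕ} {X : ℕ → Finset ν}
    (hmono : ∀ i < t, X i ⊆ X (i + 1)) (hXt : X t = G.verts)
    (hnb : ∀ i < t, ∀ v ∈ X (i + 1) \ X i, d ≤ #(G.nbrs v ∩ X i)) :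
    G.IsLeveled d (X 0) G.verts fun u => sInf {i | u ∈ X i} := by
  intro u hu
  obtain ⟨huV, huX₀⟩ := mem_sdiff.mp hu
  have hut : u ∈ X t := hXt ▸ huV
  have hmem : sInf {i | u ∈ X i} ∈ {i | u ∈ X i} := Nat.sInf_mem ⟨t, hut⟩
  have hle : sInf {i | u ∈ X i} ≤ t := Nat.sInf_le hut
  obtain ⟨j, hj⟩ := Nat.exists_eq_add_one_of_ne_zero fun h0 => huX₀ (h0 ▸ hmem)
  have huj : u ∉ X j := Nat.notMem_of_lt_sInf (s := {i | u ∈ X i}) (by omega)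
  refine (hnb j (by omega) u (mem_sdiff.mpr ⟨hj ▸ hmem, huj⟩)).trans (card_le_card fun y hy => ?_)
  obtain ⟨hyu, hyj⟩ := mem_inter.mp hy
  refine mem_filter.mpr ⟨mem_inter.mpr ⟨hyu, hXt ▸ subset_of_chain hmono (by omega) hyj⟩, ?_⟩
  show sInf _ < sInf _
  exact hj ▸ Nat.lt_succ_of_le (Nat.sInf_le hyj)

end SSGraph

/-- if `d ≥ 2`, the matroid has rank at most `d·|V(G)|` and there is a chain
`X₀ ⊆ X₁ ⊆ ⋯ ⊆ X_t = V(G)` such that every `v ∈ X_i − X_{i−1}` has at least `d`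
neighbours in `X_{i−1}`, then `G` has an `M`-seed `K` with `|K| ≤ 2|X₀| d^{t+1}/(d−1)`. -/
theorem exists_small_seed
    {ν : Type*} [DecidableEq ν] (d : ℕ) (hd : 2 ≤ d) (G₀ : SSGraph ν)
    (r : Finset (Sym2 ν) → ℕ) (hr : IsRankFn r) (hext : ZeroExtProp d r G₀)
    (G : SSGraph ν) (hG : G.Sub G₀)
    (hrank : r G₀.edges ≤ d * G.verts.card)
    (t : ℕ) (X : ℕ → Finset ν)
    (hmono : ∀ i < t, X i ⊆ X (i + 1)) (hXt : X t = G.verts)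
    (hnb : ∀ i < t, ∀ v ∈ X (i + 1) \ X i, d ≤ (G.nbrs v ∩ X i).card) :
    ∃ K : Finset ν, IsSeed d r G K ∧
      K.card * (d - 1) ≤ 2 * (X 0).card * d ^ (t + 1) := by
  have hlev := SSGraph.isLeveled_of_chain hmono hXt hnb
  have hX₀ : X 0 ⊆ G.verts := hXt ▸ subset_of_chain hmono (Nat.zero_le t)
  obtain ⟨K, hX₀K, -, hKV, hrankK, hsizeK⟩ := hlev.exists_core hr hext hG (by omega) hX₀
    subset_rfl (fun u hu => Nat.sInf_le (hXt ▸ hu : u ∈ X t)) (empty_subset _)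
  have hlower := hlev.rank_induce_add_le hr hext hG subset_rfl hX₀K hKV
  rw [SSGraph.induce_verts] at hrankK hsizeK hlower
  have hcard : d * #G.verts = d * #(G.verts \ K) + d * #K := by
    rw [← mul_add, card_sdiff_add_card_eq_card hKV]
  refine ⟨K, ⟨hKV, ?_, fun K' hKK' hK'V => ?_⟩, ?_⟩
  · rw [← card_sdiff_of_subset hKV]
    omega
  · obtain ⟨x, hx, hxK'⟩ := hlev.exists_le_card_nbrs_inter (hX₀K.trans hKK')
      (not_subset_of_ssubset hK'V)
    exact ⟨x, hx, hxK'.trans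
      (card_le_card (inter_comm _ K' ▸ inter_subset_inter_right (subset_insert x K')))⟩
  · have hE : r G.edges ≤ d * #G.verts := (hr.mono hG.2).trans hrank
    rw [← card_sdiff_add_card_eq_card hX₀K, add_comm]
    rw [sum_empty, zero_add] at hsizeK
    have := Nat.mul_le_mul_left (2 * geomSum d t) hE
    exact card_mul_pred_le (by nlinarith)
end

section
/- Let d ≥ 1 and let G = (V,E) be a simple H_d-independent graph. Let G′ be obtained from G by a simple double 1-extension: delete an edge xy ∈ E, add two new vertices u and v, join u to d vertices of V including x, join v to d vertices of V including y, and add the edge uv. Then G′ is H_d-independent. -/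
open Classical

/-- `p` is generic: the multiset of all coordinates of the points `p v` is
algebraically independent over `ℚ`. -/
def Generic (d : ℕ) {ν : Type*} (p : ν → Fin d → ℝ) : Prop :=
  AlgebraicIndependent ℚ (fun vi : ν × Fin d => p vi.1 vi.2)

/-- The row of the hyperconnectivity matrix corresponding to an edge with first
endpoint `a` and second endpoint `b`: it has `p b` in the block of columns of `a`,
`−p a` in the block of columns of `b`, and `0` elsewhere. -/
noncomputable def hRow (d : ℕ) {ν : Type*} (p : ν → Fin d → ℝ) (a b : ν) :
    ν × Fin d → ℝ :=
  fun wi => (if wi.1 = a then p b wi.2 else 0) + (if wi.1 = b then -(p a wi.2) else 0)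

/-- The row of the hyperconnectivity matrix of an edge `e`, with the endpoints
ordered by the fixed linear order on the vertices. -/
noncomputable def eRow (d : ℕ) {ν : Type*} [LinearOrder ν] (p : ν → Fin d → ℝ)
    (e : Sym2 ν) : ν × Fin d → ℝ :=
  hRow d p
    (Sym2.lift ⟨fun a b => min a b, fun a b => min_comm a b⟩ e)
    (Sym2.lift ⟨fun a b => max a b, fun a b => max_comm a b⟩ e)

/-- The rows of `H(G,p)` indexed by the edges of `G` are linearly independent. -/
def HIndep (d : ℕ) {ν : Type*} [LinearOrder ν] (G : SimpleGraph ν)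
    (p : ν → Fin d → ℝ) : Prop :=
  LinearIndependent ℝ (fun e : G.edgeSet => eRow d p e.1)

/-!
Put `u` at the position of `y` and `v` at the position of `x`. In this special position the
rows of `G'` are independent: the rows of `G` are, the edges at `u` and at `v` are added by two
`0`-extensions whose neighbours sit at independent generic points, and the rows of `uv`, `ux`,
`vy`, `xy` then form a circuit, so `xy` may be exchanged for `uv`. Independence at one position
gives independence at every generic one, because a nonvanishing maximal minor is a nonzero
polynomial in the coordinates.
-/

open Submodule

section LinearAlgebra

variable {K : Type*} [Field K]

theorem span_range_swap_eq_top {ι α : Type*} [Fintype ι] {v : ι → α → K}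
    (hv : LinearIndependent K v) : span K (Set.range (Function.swap v)) = ⊤ := by
  by_contra hne
  obtain ⟨f, hf0, hf⟩ := exists_dual_map_eq_bot_of_lt_top (lt_top_iff_ne_top.2 hne) inferInstance
  have hf_basis : ∀ i : ι, f (fun j => if i = j then 1 else 0) = 0 := by
    refine Fintype.linearIndependent_iff.1 hv _ (funext fun a => ?_)
    have hfa : f (Function.swap v a) = 0 :=
      (Submodule.eq_bot_iff _).1 hf _ (mem_map_of_mem (subset_span ⟨a, rfl⟩))
    simpa [LinearMap.pi_apply_eq_sum_univ f (Function.swap v a), mul_comm] using hfa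
  exact hf0 (LinearMap.ext fun x => by simp [LinearMap.pi_apply_eq_sum_univ f x, hf_basis])

theorem exists_det_ne_zero_of_linearIndependent {ι α : Type*} [Fintype ι] [DecidableEq ι]
    {v : ι → α → K} (hv : LinearIndependent K v) :
    ∃ c : ι → α, (Matrix.of fun i j => v i (c j)).det ≠ 0 := by
  obtain ⟨κ, a, -, hspan, hli⟩ := exists_linearIndependent' K (Function.swap v)
  let b := Module.Basis.mk hli (by rw [hspan, span_range_swap_eq_top hv])
  let e := b.indexEquiv (Pi.basisFun K ι)
  refine ⟨a ∘ e.symm, ?_⟩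
  rw [← isUnit_iff_ne_zero, ← Matrix.isUnit_iff_isUnit_det,
    ← Matrix.linearIndependent_cols_iff_isUnit]
  exact hli.comp _ e.symm.injective

theorem linearIndependent_of_specialization {A L ι α : Type*} [CommRing A] [Field L]
    (P : ι → α → A) {φ : A →+* K} {ψ : A →+* L} (hφ : Function.Injective φ)
    (hψ : LinearIndependent L fun i a => ψ (P i a)) :
    LinearIndependent K fun i a => φ (P i a) := by
  rw [linearIndependent_iff_finset_linearIndependent]
  intro s
  obtain ⟨c, hc⟩ :=
    exists_det_ne_zero_of_linearIndependent (hψ.comp (Subtype.val : s → ι) Subtype.val_injective)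
  let M : Matrix s s A := Matrix.of fun i j => P i (c j)
  have hM : M.det ≠ 0 := fun h => hc <| by
    rw [← map_zero ψ, ← h, RingHom.map_det]
    rfl
  have hφM : (φ.mapMatrix M).det ≠ 0 := by
    rw [← RingHom.map_det]
    exact (map_ne_zero_iff φ hφ).2 hM
  exact .of_comp (LinearMap.funLeft K K c) (Matrix.linearIndependent_rows_of_det_ne_zero hφM)

variable {V W ι : Type*} [AddCommGroup V] [Module K V] [AddCommGroup W] [Module K W]
  {v : ι → V} {s t : Set ι}

theorem LinearIndepOn.union_of_map_eq_zero {f : V →ₗ[K] W} (hs : LinearIndepOn K v s)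
    (hs0 : ∀ i ∈ s, f (v i) = 0) (ht : LinearIndepOn K (f ∘ v) t) :
    LinearIndepOn K v (s ∪ t) := by
  refine hs.union (ht.of_comp f) ?_
  have hker : span K (v '' s) ≤ LinearMap.ker f :=
    span_le.2 (by rintro _ ⟨i, hi, rfl⟩; exact hs0 i hi)
  have hdisj := Submodule.range_ker_disjoint (v := fun i : t => v i) ht
  rw [← Set.image_eq_range] at hdisj
  exact hdisj.symm.mono_left hker

theorem LinearIndepOn.insert_diff_singleton_of_mem_span {a b : ι} (hs : LinearIndepOn K v s)
    (ha : a ∈ s) (hab : v a ∈ span K (v '' insert b (s \ {a}))) :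
    LinearIndepOn K v (insert b (s \ {a})) := by
  have hs' : LinearIndepOn K v (s \ {a}) := hs.mono Set.sdiff_subset
  have hna : v a ∉ span K (v '' (s \ {a})) :=
    hs'.notMem_span_iff.2 ⟨by rwa [Set.insert_sdiff_singleton, Set.insert_eq_of_mem ha], by simp⟩
  refine linearIndepOn_insert_iff.2 ⟨hs', fun hb => absurd ?_ hna⟩
  rwa [Set.image_insert_eq, span_insert_eq_span hb] at hab

end LinearAlgebra

theorem SimpleGraph.notMem_of_forall_not_adj {ν : Type*} {G : SimpleGraph ν} {u : ν}
    (hu : ∀ w, ¬G.Adj u w) {e : Sym2 ν} (he : e ∈ G.edgeSet) : u ∉ e := fun h =>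
  hu _ (by rwa [← Sym2.other_spec h, SimpleGraph.mem_edgeSet] at he)

theorem SimpleGraph.edgeSet_deleteEdges_sup_fromEdgeSet_subset {ν : Type*} (G : SimpleGraph ν)
    {S : Set (Sym2 ν)} {f g : Sym2 ν} (hf : f ∉ S) :
    (G.deleteEdges {f} ⊔ SimpleGraph.fromEdgeSet (S ∪ {g})).edgeSet ⊆
      insert g ((G.edgeSet ∪ S) \ {f}) := by
  rw [SimpleGraph.edgeSet_sup, SimpleGraph.edgeSet_deleteEdges, SimpleGraph.edgeSet_fromEdgeSet]
  rintro e (⟨he, hne⟩ | ⟨he | rfl, -⟩)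
  · exact Or.inr ⟨Or.inl he, hne⟩
  · exact Or.inr ⟨Or.inr he, fun h => hf (h ▸ he)⟩
  · exact Or.inl rfl

section Rows

variable {ν : Type*} {d : ℕ}

theorem hRow_swap (p : ν → Fin d → ℝ) (a b : ν) : hRow d p b a = -hRow d p a b := by
  funext c
  simp only [hRow, Pi.neg_apply]
  split_ifs <;> ring

theorem hRow_circuit (p : ν → Fin d → ℝ) {u v x y : ν} (hu : p u = p y) (hv : p v = p x) :
    hRow d p x y = hRow d p u v - hRow d p u x + hRow d p v y := by
  funext c
  simp only [hRow, Pi.add_apply, Pi.sub_apply, hu, hv]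
  split_ifs <;> ring

variable [LinearOrder ν]

theorem eRow_mk (p : ν → Fin d → ℝ) (a b : ν) :
    eRow d p s(a, b) = hRow d p (min a b) (max a b) := rfl

theorem eRow_mem_iff {p : ν → Fin d → ℝ} {a b : ν} {W : Submodule ℝ (ν × Fin d → ℝ)} :
    eRow d p s(a, b) ∈ W ↔ hRow d p a b ∈ W := by
  rcases le_total a b with h | h
  · rw [eRow_mk, min_eq_left h, max_eq_right h]
  · rw [eRow_mk, min_eq_right h, max_eq_left h, hRow_swap, neg_mem_iff]

theorem eRow_apply_of_notMem (p : ν → Fin d → ℝ) {e : Sym2 ν} {c : ν} (hc : c ∉ e) (k : Fin d) :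
    eRow d p e (c, k) = 0 := by
  induction e using Sym2.ind with
  | _ a b =>
    rw [Sym2.mem_iff, not_or] at hc
    rcases le_total a b with h | h <;> simp [eRow_mk, hRow, h, hc.1, hc.2]

theorem eRow_mem_of_circuit {p : ν → Fin d → ℝ} {u v x y : ν} {W : Submodule ℝ (ν × Fin d → ℝ)}
    (hu : p u = p y) (hv : p v = p x) (huv : eRow d p s(u, v) ∈ W) (hux : eRow d p s(u, x) ∈ W)
    (hvy : eRow d p s(v, y) ∈ W) : eRow d p s(x, y) ∈ W := by
  rw [eRow_mem_iff] at huv hux hvy ⊢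
  rw [hRow_circuit p hu hv]
  exact add_mem (sub_mem huv hux) hvy

theorem eRow_congr {p q : ν → Fin d → ℝ} {e : Sym2 ν} (h : ∀ c ∈ e, p c = q c) :
    eRow d p e = eRow d q e := by
  induction e using Sym2.ind with
  | _ a b =>
    rw [eRow_mk, eRow_mk]
    unfold hRow
    rw [h _ (Sym2.mem_iff.2 (min_choice a b)), h _ (Sym2.mem_iff.2 (max_choice a b))]

theorem funLeft_eRow_mk (p : ν → Fin d → ℝ) {u w : ν} (huw : u ≠ w) :
    LinearMap.funLeft ℝ ℝ (fun k : Fin d => (u, k)) (eRow d p s(u, w)) =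
      (if u ≤ w then 1 else -1 : ℝˣ) • p w := by
  funext k
  rcases lt_or_gt_of_ne huw with h | h
  · simp [eRow_mk, hRow, h.le, huw]
  · simp [eRow_mk, hRow, h.le, h.not_ge, huw]

/-- A `0`-extension: in the columns of `u` the old rows vanish and the new ones are `± p w`. -/
theorem LinearIndepOn.union_star {p : ν → Fin d → ℝ} {s : Set (Sym2 ν)} {u : ν} {D : Set ν}
    (hs : LinearIndepOn ℝ (eRow d p) s) (hsu : ∀ e ∈ s, u ∉ e) (huD : u ∉ D)
    (hD : LinearIndepOn ℝ p D) :
    LinearIndepOn ℝ (eRow d p) (s ∪ (fun w => s(u, w)) '' D) := by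
  refine hs.union_of_map_eq_zero (f := LinearMap.funLeft ℝ ℝ fun k : Fin d => (u, k))
    (fun e he => funext fun k => eRow_apply_of_notMem p (hsu e he) k)
    (LinearIndepOn.image_of_comp _ _ ?_)
  have hsign : (fun w : D => (LinearMap.funLeft ℝ ℝ fun k : Fin d => (u, k)) (eRow d p s(u, w))) =
      (fun w : D => if u ≤ (w : ν) then 1 else -1 : D → ℝˣ) • fun w : D => p w :=
    funext fun w => funLeft_eRow_mk p (ne_of_mem_of_not_mem w.2 huD).symm
  rw [LinearIndepOn, Function.comp_def, Function.comp_def, hsign]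
  exact hD.units_smul _

end Rows

section Generic

variable {ν : Type*} {d : ℕ}
open MvPolynomial

theorem Generic.linearIndepOn {p : ν → Fin d → ℝ} (hp : Generic d p) {D : Finset ν}
    (hD : D.card ≤ d) : LinearIndepOn ℝ p D := by
  let e : D ↪ Fin d := D.equivFin.toEmbedding.trans (Fin.castLEEmb hD)
  let g : ν × Fin d → ℝ := fun c =>
    if h : c.1 ∈ D then (Pi.single (e ⟨c.1, h⟩) 1 : Fin d → ℝ) c.2 else 0
  have hg : LinearIndependent ℝ fun w : D => (Pi.single (e w) 1 : Fin d → ℝ) := by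
    simpa [Function.comp_def] using (Pi.basisFun ℝ (Fin d)).linearIndependent.comp e e.injective
  have := linearIndependent_of_specialization
    (fun (w : D) (k : Fin d) => (X ((w : ν), k) : MvPolynomial (ν × Fin d) ℚ))
    (ψ := (aeval g).toRingHom) hp (by simpa [g] using hg)
  rw [LinearIndepOn]
  simpa using this

noncomputable def eRowPoly [LinearOrder ν] (d : ℕ) (e : Sym2 ν) (c : ν × Fin d) :
    MvPolynomial (ν × Fin d) ℚ :=
  (if c.1 = Sym2.lift ⟨fun a b => min a b, fun a b => min_comm a b⟩ e then
      X (Sym2.lift ⟨fun a b => max a b, fun a b => max_comm a b⟩ e, c.2) else 0) +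
    (if c.1 = Sym2.lift ⟨fun a b => max a b, fun a b => max_comm a b⟩ e then
      -X (Sym2.lift ⟨fun a b => min a b, fun a b => min_comm a b⟩ e, c.2) else 0)

theorem aeval_eRowPoly [LinearOrder ν] (p : ν → Fin d → ℝ) (e : Sym2 ν) (c : ν × Fin d) :
    aeval (fun c : ν × Fin d => p c.1 c.2) (eRowPoly d e c) = eRow d p e c := by
  simp only [eRowPoly, eRow, hRow, map_add]
  congr 1 <;> split_ifs <;> simp

theorem Generic.linearIndepOn_eRow [LinearOrder ν] {p q : ν → Fin d → ℝ} (hp : Generic d p)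
    {s : Set (Sym2 ν)} (hq : LinearIndepOn ℝ (eRow d q) s) : LinearIndepOn ℝ (eRow d p) s := by
  have hq' : LinearIndependent ℝ fun (e : s) c =>
      (aeval fun c : ν × Fin d => q c.1 c.2).toRingHom (eRowPoly d e c) := by
    rw [LinearIndepOn] at hq
    simpa [aeval_eRowPoly] using hq
  rw [LinearIndepOn]
  simpa [aeval_eRowPoly] using linearIndependent_of_specialization _ hp hq'

end Generic

theorem hIndep_double_one_extension_general {ν : Type*} [LinearOrder ν] (d : ℕ)
    (G : SimpleGraph ν)
    (hG : ∀ p : ν → Fin d → ℝ, Generic d p → HIndep d G p)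
    (x y : ν) (hxy : G.Adj x y)
    (u v : ν) (hu : ∀ w, ¬ G.Adj u w) (hv : ∀ w, ¬ G.Adj v w) (huv : u ≠ v)
    (Du Dv : Finset ν) (hDu : Du.card = d) (hDv : Dv.card = d)
    (hxDu : x ∈ Du) (hyDv : y ∈ Dv)
    (huDu : u ∉ Du) (huDv : u ∉ Dv) (hvDu : v ∉ Du) (hvDv : v ∉ Dv)
    (G' : SimpleGraph ν)
    (hG' : G' = (G.deleteEdges {s(x, y)}) ⊔ SimpleGraph.fromEdgeSet
      (({e | ∃ w ∈ Du, e = s(u, w)} ∪ {e | ∃ w ∈ Dv, e = s(v, w)}) ∪ {s(u, v)})) :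
    ∀ p : ν → Fin d → ℝ, Generic d p → HIndep d G' p := by
  intro p hp
  have hGu (e) (he : e ∈ G.edgeSet) : u ∉ e := SimpleGraph.notMem_of_forall_not_adj hu he
  have hGv (e) (he : e ∈ G.edgeSet) : v ∉ e := SimpleGraph.notMem_of_forall_not_adj hv he
  obtain ⟨hux, huy⟩ : u ≠ x ∧ u ≠ y := by simpa [not_or] using hGu s(x, y) hxy
  obtain ⟨hvx, hvy⟩ : v ≠ x ∧ v ≠ y := by simpa [not_or] using hGv s(x, y) hxy
  set q := Function.update (Function.update p u (p y)) v (p x)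
  have hpq (w) (hwu : w ≠ u) (hwv : w ≠ v) : p w = q w := by simp [q, hwu, hwv]
  have hGq : LinearIndepOn ℝ (eRow d q) G.edgeSet :=
    LinearIndepOn.congr (hG p hp) fun e he => eRow_congr fun c hc =>
      hpq c (ne_of_mem_of_not_mem hc (hGu e he)) (ne_of_mem_of_not_mem hc (hGv e he))
  have hDq (D : Finset ν) (hD : D.card = d) (huD : u ∉ D) (hvD : v ∉ D) :
      LinearIndepOn ℝ q D := (hp.linearIndepOn hD.le).congr fun w hw =>
    hpq w (ne_of_mem_of_not_mem hw huD) (ne_of_mem_of_not_mem hw hvD)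
  set T := G.edgeSet ∪ ((fun w => s(u, w)) '' Du ∪ (fun w => s(v, w)) '' Dv)
  have hT : LinearIndepOn ℝ (eRow d q) T := by
    simp only [T, ← Set.union_assoc]
    refine (hGq.union_star hGu huDu (hDq Du hDu huDu hvDu)).union_star ?_ hvDv
      (hDq Dv hDv huDv hvDv)
    rintro e (he | ⟨w, hw, rfl⟩)
    · exact hGv e he
    · simp [huv.symm, (ne_of_mem_of_not_mem hw hvDu).symm]
  have hmem (e) (he : e ∈ insert s(u, v) (T \ {s(x, y)})) :
      eRow d q e ∈ span ℝ (eRow d q '' insert s(u, v) (T \ {s(x, y)})) :=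
    subset_span (Set.mem_image_of_mem _ he)
  have hxy_span := eRow_mem_of_circuit (by simp [q, huv, huy.symm, hvy.symm])
    (by simp [q, hux.symm, hvx.symm]) (hmem _ (Set.mem_insert _ _))
    (hmem _ (Or.inr ⟨Or.inr (Or.inl ⟨x, hxDu, rfl⟩), by simp [hux, huy]⟩))
    (hmem _ (Or.inr ⟨Or.inr (Or.inr ⟨y, hyDv, rfl⟩), by simp [hvx, hvy]⟩))
  refine hp.linearIndepOn_eRow
    ((hT.insert_diff_singleton_of_mem_span (Or.inl hxy) hxy_span).mono ?_)
  have hstar (a : ν) (D : Finset ν) : {e | ∃ w ∈ D, e = s(a, w)} = (fun w => s(a, w)) '' D := by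
    ext; simp [eq_comm]
  rw [hG', hstar, hstar]
  refine G.edgeSet_deleteEdges_sup_fromEdgeSet_subset ?_
  rintro (⟨w, -, h : s(u, w) = s(x, y)⟩ | ⟨w, -, h : s(v, w) = s(x, y)⟩)
  · exact hGu s(x, y) hxy (h ▸ Sym2.mem_mk_left u w)
  · exact hGv s(x, y) hxy (h ▸ Sym2.mem_mk_left v w)

/-- a simple double 1-extension (delete an edge `xy`, add two new
vertices `u,v`, join `u` to `d` vertices of `V` including `x`, join `v` to `d`
vertices of `V` including `y`, and add the edge `uv`) preserves `H_d`-independence. -/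
theorem hIndep_double_one_extension {ν : Type*} [LinearOrder ν] (d : ℕ) (hd : 1 ≤ d)
    (G : SimpleGraph ν)
    (hG : ∀ p : ν → Fin d → ℝ, Generic d p → HIndep d G p)
    (x y : ν) (hxy : G.Adj x y)
    (u v : ν) (hu : ∀ w, ¬ G.Adj u w) (hv : ∀ w, ¬ G.Adj v w) (huv : u ≠ v)
    (Du Dv : Finset ν) (hDu : Du.card = d) (hDv : Dv.card = d)
    (hxDu : x ∈ Du) (hyDv : y ∈ Dv)
    (huDu : u ∉ Du) (huDv : u ∉ Dv) (hvDu : v ∉ Du) (hvDv : v ∉ Dv)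
    (G' : SimpleGraph ν)
    (hG' : G' = (G.deleteEdges {s(x, y)}) ⊔ SimpleGraph.fromEdgeSet
      (({e | ∃ w ∈ Du, e = s(u, w)} ∪ {e | ∃ w ∈ Dv, e = s(v, w)}) ∪ {s(u, v)})) :
    ∀ p : ν → Fin d → ℝ, Generic d p → HIndep d G' p :=
  hIndep_double_one_extension_general d G hG x y hxy u v hu hv huv Du Dv hDu hDv hxDu hyDv huDu huDv
    hvDu hvDv G' hG'
end
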